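/- arXiv:2602.18768 — 3 statements merged into one kernel-verified Lean document; each statement's English description precedes it below -/
import Mathlib

section
/- Let G be a finite directed graph and p a non-extendable simple path whose vertices do not all lie in one SCC. If (SC_{t_1}, ..., SC_{t_l}) is the sequence of SCCs visited by p (as contiguous segments, in order), then every in-neighbor of the first vertex of p lies in V(p) ∩ SC_{t_1}, and every out-neighbor of the last vertex of p lies in V(p) ∩ SC_{t_l}. -/
variable {V : Type*}

/-- Reachability: there is a directed path (possibly trivial) from `u` to `v`. -/
def Reach (E : V → V → Prop) : V → V → Prop := Relation.ReflTransGen E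

/-- Mutual reachability. -/
def MutReach (E : V → V → Prop) (u v : V) : Prop := Reach E u v ∧ Reach E v u

/-- The strongly connected component of `v`, as a vertex set. -/
def SCCOf (E : V → V → Prop) (v : V) : Set V := {w | MutReach E v w}

/-- `C` is (the vertex set of) a strongly connected component of the graph. -/
def IsSCC (E : V → V → Prop) (C : Set V) : Prop := ∃ v, C = SCCOf E v

/-- Edge relation of the condensation `Comp(G)`. -/
def CompEdge (E : V → V → Prop) (C D : Set V) : Prop :=
  IsSCC E C ∧ IsSCC E D ∧ C ≠ D ∧ ∃ a ∈ C, ∃ b ∈ D, E a b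

/-- A simple path: nonempty vertex list, pairwise distinct, consecutive pairs are edges. -/
def SimplePath (E : V → V → Prop) (p : List V) : Prop :=
  p ≠ [] ∧ p.Nodup ∧ p.Chain' E

/-- A simple cycle `(v₁,…,vₙ,v₁)`, represented by the open list `(v₁,…,vₙ)`
together with the closing edge `(vₙ,v₁)`. -/
def SimpleCycle (E : V → V → Prop) (p : List V) : Prop :=
  ∃ h : p ≠ [], p.Nodup ∧ p.Chain' E ∧ E (p.getLast h) (p.head h)

/-- Forward extendability of a simple path. -/
def FwdExt (E : V → V → Prop) (p : List V) : Prop :=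
  ∃ w, SimplePath E (p ++ [w]) ∨ SimpleCycle E (p ++ [w])

/-- Backward extendability of a simple path. -/
def BwdExt (E : V → V → Prop) (p : List V) : Prop :=
  ∃ w, SimplePath E (w :: p) ∨ SimpleCycle E (w :: p)

def Extendable (E : V → V → Prop) (p : List V) : Prop := FwdExt E p ∨ BwdExt E p

/-- A prime path: a simple cycle or a non-extendable simple path. -/
def PrimePath (E : V → V → Prop) (p : List V) : Prop :=
  SimpleCycle E p ∨ (SimplePath E p ∧ ¬ Extendable E p)

section

variable {E : V → V → Prop} {p : List V}

lemma reach_head_of_mem (hc : p.IsChain E) (hp : p ≠ []) {u : V} (hu : u ∈ p) :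
    Reach E (p.head hp) u :=
  hc.induction (Reach E (p.head hp)) p (fun _ _ hxy hx => Relation.ReflTransGen.tail hx hxy)
    (fun _ => Relation.ReflTransGen.refl) u hu

lemma reach_getLast_of_mem (hc : p.IsChain E) (hp : p ≠ []) {u : V} (hu : u ∈ p) :
    Reach E u (p.getLast hp) :=
  hc.backwards_induction (Reach E · (p.getLast hp)) p
    (fun _ _ hxy hy => Relation.ReflTransGen.head hxy hy) (fun _ => Relation.ReflTransGen.refl) u hu

lemma SimplePath.cons (hsp : SimplePath E p) (hp : p ≠ []) {u : V} (hu : u ∉ p)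
    (he : E u (p.head hp)) : SimplePath E (u :: p) :=
  ⟨List.cons_ne_nil u p, List.nodup_cons.mpr ⟨hu, hsp.2.1⟩, hsp.2.2.cons_of_ne_nil hp he⟩

lemma SimplePath.concat (hsp : SimplePath E p) (hp : p ≠ []) {u : V} (hu : u ∉ p)
    (he : E (p.getLast hp) u) : SimplePath E (p ++ [u]) := by
  refine ⟨List.concat_ne_nil u p, List.concat_eq_append ▸ hsp.2.1.concat hu, ?_⟩
  change (p ++ [u]).IsChain E
  rw [List.isChain_append]
  refine ⟨hsp.2.2, .singleton u, fun x hx y hy => ?_⟩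
  rw [List.getLast?_eq_some_getLast hp, Option.mem_some_iff] at hx
  rw [List.head?_cons, Option.mem_some_iff] at hy
  exact hx ▸ hy ▸ he

lemma SimplePath.mem_of_rel_head (hsp : SimplePath E p) (hbwd : ¬ BwdExt E p) (hp : p ≠ [])
    {u : V} (he : E u (p.head hp)) : u ∈ p :=
  by_contra fun hu => hbwd ⟨u, .inl (hsp.cons hp hu he)⟩

lemma SimplePath.mem_of_getLast_rel (hsp : SimplePath E p) (hfwd : ¬ FwdExt E p) (hp : p ≠ [])
    {u : V} (he : E (p.getLast hp) u) : u ∈ p :=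
  by_contra fun hu => hfwd ⟨u, .inl (hsp.concat hp hu he)⟩

end

theorem stmt15_general (E : V → V → Prop) (p : List V) (hp : p ≠ [])
    (hsp : SimplePath E p) (hne : ¬ Extendable E p) :
    (∀ u, E u (p.head hp) → u ∈ p ∧ MutReach E u (p.head hp)) ∧
    (∀ u, E (p.getLast hp) u → u ∈ p ∧ MutReach E u (p.getLast hp)) := by
  obtain ⟨hfwd, hbwd⟩ := not_or.mp hne
  refine ⟨fun u he => ?_, fun u he => ?_⟩
  · have hu := hsp.mem_of_rel_head hbwd hp he
    exact ⟨hu, .single he, reach_head_of_mem hsp.2.2 hp hu⟩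
  · have hu := hsp.mem_of_getLast_rel hfwd hp he
    exact ⟨hu, reach_getLast_of_mem hsp.2.2 hp hu, .single he⟩

/-- For a non-extendable simple path not contained in a single SCC, every in-neighbor of
the first vertex lies on the path and in the SCC of the first vertex, and every
out-neighbor of the last vertex lies on the path and in the SCC of the last vertex. -/
theorem stmt15 [Fintype V] (E : V → V → Prop) (p : List V) (hp : p ≠ [])
    (hsp : SimplePath E p) (hne : ¬ Extendable E p)
    (hnot : ¬ ∀ u ∈ p, ∀ w ∈ p, MutReach E u w) :
    (∀ u, E u (p.head hp) → u ∈ p ∧ MutReach E u (p.head hp)) ∧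
    (∀ u, E (p.getLast hp) u → u ∈ p ∧ MutReach E u (p.getLast hp)) :=
  stmt15_general E p hp hsp hne
end

section
/- Let G be a finite directed graph, let SC_{t_1}, ..., SC_{t_l} be distinct SCCs forming a simple path in the condensation Comp(G), and let p = (v_1, ..., v_n) be a path in G that visits exactly these SCCs in this order as contiguous segments, such that the restriction of p to each SC_{t_i} is a simple path, in(v_1) ⊆ V(p) ∩ SC_{t_1}, and out(v_n) ⊆ V(p) ∩ SC_{t_l}. Then p is a prime path of G (a non-extendable simple path). -/
/-!
Distinct strongly connected components are disjoint, so the simple segments of `p`, lying in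
pairwise distinct components, concatenate to a simple path. It cannot be extended: a new vertex
before `v₁` or after `vₙ` would be an in-neighbour of `v₁` or an out-neighbour of `vₙ`, and all of
those already lie on `p`.
-/

variable {V : Type*}

variable {E : V → V → Prop}

lemma IsSCC.eq_of_mem {C D : Set V} (hC : IsSCC E C) (hD : IsSCC E D) {x : V}
    (hxC : x ∈ C) (hxD : x ∈ D) : C = D := by
  obtain ⟨v, rfl⟩ := hC
  obtain ⟨w, rfl⟩ := hD
  obtain ⟨hvx, hxv⟩ := hxC
  obtain ⟨hwx, hxw⟩ := hxD
  ext y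
  constructor
  · rintro ⟨hvy, hyv⟩; exact ⟨(hwx.trans hxv).trans hvy, hyv.trans (hvx.trans hxw)⟩
  · rintro ⟨hwy, hyw⟩; exact ⟨(hvx.trans hxw).trans hwy, hyw.trans (hwx.trans hxv)⟩

lemma IsSCC.disjoint {C D : Set V} (hC : IsSCC E C) (hD : IsSCC E D) (hne : C ≠ D) :
    Disjoint C D :=
  Set.disjoint_left.2 fun _ hxC hxD => hne (hC.eq_of_mem hD hxC hxD)

namespace List

variable {α : Type*} {segs : List (List α)} {S : List (Set α)}

lemma Forall₂.exists_mem_of_mem_flatten (h : Forall₂ (fun s C => ∀ v ∈ s, v ∈ C) segs S)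
    {v : α} (hv : v ∈ segs.flatten) : ∃ C ∈ S, v ∈ C := by
  induction h with
  | nil => simp at hv
  | @cons s C _ _ hsC _ ih =>
    rcases mem_append.1 (flatten_cons ▸ hv) with hvs | hvt
    · exact ⟨C, mem_cons_self, hsC v hvs⟩
    · obtain ⟨D, hD, hvD⟩ := ih hvt
      exact ⟨D, mem_cons_of_mem C hD, hvD⟩

lemma Forall₂.nodup_flatten (h : Forall₂ (fun s C => s.Nodup ∧ ∀ v ∈ s, v ∈ C) segs S)
    (hS : S.Pairwise _root_.Disjoint) : segs.flatten.Nodup := by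
  induction h with
  | nil => simp
  | @cons s C _ S' hsC htail ih =>
    rw [pairwise_cons] at hS
    rw [flatten_cons, nodup_append]
    refine ⟨hsC.1, ih hS.2, ?_⟩
    rintro v hvs _ hvt rfl
    obtain ⟨D, hD, hvD⟩ := (htail.imp fun _ _ h => h.2).exists_mem_of_mem_flatten hvt
    exact Set.disjoint_left.1 (hS.1 D hD) (hsC.2 v hvs) hvD

end List

lemma SimpleCycle.simplePath {p : List V} (h : SimpleCycle E p) : SimplePath E p :=
  let ⟨hp, hnd, hc, _⟩ := h
  ⟨hp, hnd, hc⟩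

lemma not_fwdExt_of_out_subset {p : List V} (hp : p ≠ [])
    (hout : ∀ u, E (p.getLast hp) u → u ∈ p) : ¬ FwdExt E p := by
  rintro ⟨w, hw⟩
  obtain ⟨-, hnd, hc⟩ := hw.elim id SimpleCycle.simplePath
  have hE : E (p.getLast hp) w := hc.rel_getLast_head_of_append hp (List.cons_ne_nil w [])
  exact List.disjoint_of_nodup_append hnd (hout w hE) (List.mem_singleton_self w)

lemma not_bwdExt_of_in_subset {p : List V} (hp : p ≠ [])
    (hin : ∀ u, E u (p.head hp) → u ∈ p) : ¬ BwdExt E p := by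
  rintro ⟨w, hw⟩
  obtain ⟨-, hnd, hc⟩ := hw.elim id SimpleCycle.simplePath
  have hE : E w (p.head hp) := (List.isChain_cons.1 hc).1 _ (List.head?_eq_some_head hp)
  exact (List.nodup_cons.1 hnd).1 (hin w hE)

theorem stmt16_general (E : V → V → Prop) (p : List V) (hp : p ≠ [])
    (hc : p.Chain' E)
    (S : List (Set V)) (hS : S ≠ []) (segs : List (List V))
    (hjoin : segs.flatten = p) (hlen : segs.length = S.length)
    (hSCC : ∀ C ∈ S, IsSCC E C) (hnodupS : S.Nodup)
    (hseg : ∀ q ∈ segs.zip S, q.1 ≠ [] ∧ q.1.Nodup ∧ ∀ v ∈ q.1, v ∈ q.2)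
    (hin : ∀ u, E u (p.head hp) → u ∈ p ∧ u ∈ S.head hS)
    (hout : ∀ u, E (p.getLast hp) u → u ∈ p ∧ u ∈ S.getLast hS) :
    SimplePath E p ∧ ¬ Extendable E p := by
  have hdisj : S.Pairwise Disjoint :=
    hnodupS.pairwise_of_forall_ne fun C hC D hD => (hSCC C hC).disjoint (hSCC D hD)
  have hsegs : segs.Forall₂ (fun s C => s.Nodup ∧ ∀ v ∈ s, v ∈ C) S :=
    List.forall₂_iff_zip.2 ⟨hlen, fun hq => (hseg _ hq).2⟩
  refine ⟨⟨hp, hjoin ▸ hsegs.nodup_flatten hdisj, hc⟩, ?_⟩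
  rintro (hfwd | hbwd)
  · exact not_fwdExt_of_out_subset hp (fun u hu => (hout u hu).1) hfwd
  · exact not_bwdExt_of_in_subset hp (fun u hu => (hin u hu).1) hbwd

/-- Sufficiency: a path that visits a simple path of distinct SCCs in the condensation as
contiguous segments, each segment simple, with `in(v₁) ⊆ V(p) ∩ SC_{t₁}` and
`out(vₙ) ⊆ V(p) ∩ SC_{t_l}`, is a non-extendable simple path (hence a prime path). -/
theorem stmt16 [Fintype V] (E : V → V → Prop) (p : List V) (hp : p ≠ [])
    (hc : p.Chain' E)
    (S : List (Set V)) (hS : S ≠ []) (segs : List (List V))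
    (hjoin : segs.flatten = p) (hlen : segs.length = S.length)
    (hSCC : ∀ C ∈ S, IsSCC E C) (hnodupS : S.Nodup)
    (hchainS : S.Chain' (CompEdge E))
    (hseg : ∀ q ∈ segs.zip S, q.1 ≠ [] ∧ q.1.Nodup ∧ ∀ v ∈ q.1, v ∈ q.2)
    (hin : ∀ u, E u (p.head hp) → u ∈ p ∧ u ∈ S.head hS)
    (hout : ∀ u, E (p.getLast hp) u → u ∈ p ∧ u ∈ S.getLast hS) :
    SimplePath E p ∧ ¬ Extendable E p :=
  stmt16_general E p hp hc S hS segs hjoin hlen hSCC hnodupS hseg hin hout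
end

section
/- Let G be a SESE graph with entry s and exit t (in(s) = ∅, out(t) = ∅, and every vertex lies on some path from s to t). Then every prime path of G that is not a simple cycle and whose vertex set is not contained in a single nontrivial SCC either starts at s or starts at a vertex all of whose in-neighbors lie in its own SCC, and either ends at t or ends at a vertex all of whose out-neighbors lie in its own SCC. -/
/-
A non-extendable simple path cannot be prolonged backwards by a fresh vertex, so every
in-neighbour `u` of its first vertex `v₁` already lies on the path; then `u → v₁` is an edge and
`v₁` reaches `u` along the path, so `u` and `v₁` are mutually reachable. Symmetrically every
out-neighbour of the last vertex lies on the path and is reached from it. Hence the right-hand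
alternatives always hold.
-/

variable {V : Type*}

open Relation

theorem List.IsChain.reflTransGen_head {α : Type*} {r : α → α → Prop} {l : List α}
    (h : l.IsChain r) (hl : l ≠ []) {u : α} (hu : u ∈ l) : ReflTransGen r (l.head hl) u :=
  h.induction _ l (fun _ _ hxy hx => hx.tail hxy) (fun _ => .refl) u hu

theorem List.IsChain.reflTransGen_getLast {α : Type*} {r : α → α → Prop} {l : List α}
    (h : l.IsChain r) (hl : l ≠ []) {u : α} (hu : u ∈ l) : ReflTransGen r u (l.getLast hl) :=
  h.backwards_induction _ l (fun _ _ hxy (hy : ReflTransGen r _ _) => hy.head hxy)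
    (fun _ => .refl) u hu

namespace SimplePath

variable {E : V → V → Prop} {p : List V}

theorem mem_of_rel_head_s19 (hp : SimplePath E p) (hbwd : ¬ BwdExt E p) {u : V}
    (hu : E u (p.head hp.1)) : u ∈ p := by
  by_contra hup
  obtain ⟨hne, hnd, hch⟩ := hp
  exact hbwd ⟨u, .inl ⟨List.cons_ne_nil _ _, List.nodup_cons.2 ⟨hup, hnd⟩,
    hch.cons_of_ne_nil hne hu⟩⟩

theorem mem_of_rel_getLast (hp : SimplePath E p) (hfwd : ¬ FwdExt E p) {u : V}
    (hu : E (p.getLast hp.1) u) : u ∈ p := by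
  by_contra hup
  obtain ⟨hne, hnd, hch⟩ := hp
  refine hfwd ⟨u, .inl ⟨List.concat_ne_nil _ _, ?_, ?_⟩⟩
  · exact hnd.append (List.nodup_singleton u) (by simpa using hup)
  · refine hch.append (List.isChain_singleton u) ?_
    simpa [List.getLast?_eq_some_getLast hne] using hu

theorem mutReach_of_rel_head (hp : SimplePath E p) (hbwd : ¬ BwdExt E p) {u : V}
    (hu : E u (p.head hp.1)) : MutReach E u (p.head hp.1) :=
  ⟨ReflTransGen.single hu, hp.2.2.reflTransGen_head hp.1 (hp.mem_of_rel_head_s19 hbwd hu)⟩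

theorem mutReach_of_rel_getLast (hp : SimplePath E p) (hfwd : ¬ FwdExt E p) {u : V}
    (hu : E (p.getLast hp.1) u) : MutReach E u (p.getLast hp.1) :=
  ⟨hp.2.2.reflTransGen_getLast hp.1 (hp.mem_of_rel_getLast hfwd hu), ReflTransGen.single hu⟩

end SimplePath

theorem stmt19_general (E : V → V → Prop) (s t : V)
    (p : List V) (hp : p ≠ []) (hprime : PrimePath E p)
    (hnotcyc : ¬ SimpleCycle E p) :
    (p.head hp = s ∨ ∀ u, E u (p.head hp) → MutReach E u (p.head hp)) ∧
    (p.getLast hp = t ∨ ∀ u, E (p.getLast hp) u → MutReach E u (p.getLast hp)) := by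
  obtain ⟨hpath, hnotext⟩ := hprime.resolve_left hnotcyc
  exact ⟨.inr fun _ => hpath.mutReach_of_rel_head (hnotext ∘ .inr),
    .inr fun _ => hpath.mutReach_of_rel_getLast (hnotext ∘ .inl)⟩

/-- In a SESE graph, every prime path that is not a simple cycle and whose vertex set is
not contained in a single nontrivial SCC either starts at `s` or starts at a vertex all
of whose in-neighbors lie in its own SCC, and either ends at `t` or ends at a vertex all
of whose out-neighbors lie in its own SCC. -/
theorem stmt19 [Fintype V] (E : V → V → Prop) (s t : V) (hst : s ≠ t)
    (hs : ∀ u, ¬ E u s) (ht : ∀ u, ¬ E t u)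
    (hsese : ∀ v : V, ∃ q : List V, q.Chain' E ∧ q.head? = some s ∧
      q.getLast? = some t ∧ v ∈ q)
    (p : List V) (hp : p ≠ []) (hprime : PrimePath E p)
    (hnotcyc : ¬ SimpleCycle E p)
    (hnotSCC : ¬ ∃ C : Set V, IsSCC E C ∧ (∃ a ∈ C, Relation.TransGen E a a) ∧
      ∀ v ∈ p, v ∈ C) :
    (p.head hp = s ∨ ∀ u, E u (p.head hp) → MutReach E u (p.head hp)) ∧
    (p.getLast hp = t ∨ ∀ u, E (p.getLast hp) u → MutReach E u (p.getLast hp)) :=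
  stmt19_general E s t p hp hprime hnotcyc
end
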